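/- arXiv:2306.11324 — 2 statements merged into one kernel-verified Lean document; each statement's English description precedes it below -/
import Mathlib

section
/- Let κ > 0 and let μ be a finite complex measure on ℝ³ with compact support. Define the single layer potential u(x) = ∫ G(x,y) dμ(y) and the function u_∞ on the unit sphere by u_∞(x̂) = (1/4π) ∫ e^{−iκ⟨x̂, y⟩} dμ(y). Then ‖x‖₂ · e^{−iκ‖x‖₂} · u(x) − u_∞(x/‖x‖₂) → 0 as ‖x‖₂ → ∞; in particular u admits the asymptotic expansion u(x) = (e^{iκ‖x‖₂}/‖x‖₂)·( u_∞(x/‖x‖₂) + O(1/‖x‖₂) ), so u_∞ is the far-field pattern of u. -/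
open MeasureTheory
open scoped RealInnerProductSpace

/-- The fundamental solution `G(x,y) = e^{iκ‖x−y‖}/(4π‖x−y‖)` of the Helmholtz equation. -/
noncomputable def helmholtzG (κ : ℝ) (x y : EuclideanSpace ℝ (Fin 3)) : ℂ :=
  Complex.exp (Complex.I * (κ : ℂ) * (‖x - y‖ : ℂ)) / (4 * (Real.pi : ℂ) * (‖x - y‖ : ℂ))

/-! For `‖y‖ ≤ M ≤ ‖x‖ / 2` the distance expands as `‖x - y‖ = ‖x‖ - ⟪x/‖x‖, y⟫ + O(M²/‖x‖)` and
`‖x‖ / ‖x - y‖ = 1 + O(M/‖x‖)`. Since `t ↦ e^{it}` is 1-Lipschitz, the rescaled kernel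
`‖x‖ e^{-iκ‖x‖} G(x, y)` is within `O(1/‖x‖)` of `(4π)⁻¹ e^{-iκ⟪x/‖x‖, y⟫}`, uniformly on the
support of `μ`; integrating against `ρ dμ` bounds the far-field remainder by `C/‖x‖`. -/

open Complex Filter Topology

theorem norm_exp_I_mul_ofReal_sub_exp_I_mul_ofReal_le (a b : ℝ) :
    ‖exp (I * a) - exp (I * b)‖ ≤ |a - b| := by
  have h : exp (I * a) - exp (I * b) = exp (I * b) * (exp (I * ↑(a - b)) - 1) := by
    rw [mul_sub, ← exp_add]; push_cast; ring_nf
  rw [h, norm_mul, norm_exp_I_mul_ofReal, one_mul]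
  simpa using Real.norm_exp_I_mul_ofReal_sub_one_le (x := a - b)

theorem abs_norm_sub_sub_norm_add_inner_le {E : Type*} [NormedAddCommGroup E]
    [InnerProductSpace ℝ E] {x : E} (hx : x ≠ 0) (y : E) :
    |‖x - y‖ - ‖x‖ + ⟪‖x‖⁻¹ • x, y⟫| ≤ 2 * ‖y‖ ^ 2 / ‖x‖ := by
  set r := ‖x‖
  set d := ‖x - y‖
  set p := ⟪x, y⟫
  have hr : 0 < r := norm_pos_iff.mpr hx
  have hd0 : 0 ≤ d := norm_nonneg _
  have hdr : 0 < d + r := by positivity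
  -- `d - r = (d² - r²)/(d + r)`, with `d² = r² - 2p + ‖y‖²`
  have key : d - r + r⁻¹ * p = ‖y‖ ^ 2 / (d + r) + p * (d - r) / (r * (d + r)) := by
    have hsq : d ^ 2 = r ^ 2 - 2 * p + ‖y‖ ^ 2 := norm_sub_sq_real x y
    field_simp
    linear_combination r * hsq
  have hp : |p| ≤ r * ‖y‖ := abs_real_inner_le_norm x y
  have hd : |d - r| ≤ ‖y‖ := by simpa [d, r] using abs_norm_sub_norm_le (x - y) x
  rw [real_inner_smul_left, key]
  calc |‖y‖ ^ 2 / (d + r) + p * (d - r) / (r * (d + r))|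
      ≤ ‖y‖ ^ 2 / r + r * ‖y‖ * ‖y‖ / (r * r) := by
        refine (abs_add_le _ _).trans (add_le_add ?_ ?_)
        · rw [abs_div, abs_of_nonneg (by positivity), abs_of_pos hdr]
          gcongr; linarith
        · rw [abs_div, abs_mul, abs_of_pos (by positivity : 0 < r * (d + r))]
          gcongr
          linarith
    _ = 2 * ‖y‖ ^ 2 / r := by field_simp; ring

theorem norm_helmholtzG (κ : ℝ) (x y : EuclideanSpace ℝ (Fin 3)) :
    ‖helmholtzG κ x y‖ = (4 * Real.pi * ‖x - y‖)⁻¹ := by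
  rw [helmholtzG, norm_div, mul_assoc, ← ofReal_mul, norm_exp_I_mul_ofReal, one_div]
  norm_cast
  rw [Real.norm_of_nonneg (by positivity)]

theorem helmholtzG_rescaled_eq (κ : ℝ) {x y : EuclideanSpace ℝ (Fin 3)} (hxy : x ≠ y) :
    (‖x‖ : ℂ) * exp (-(I * κ * ‖x‖)) * helmholtzG κ x y
      = (4 * Real.pi : ℂ)⁻¹ * ((‖x‖ / ‖x - y‖ : ℝ) * exp (I * ↑(κ * (‖x - y‖ - ‖x‖)))) := by
  have hd : (‖x - y‖ : ℂ) ≠ 0 := by exact_mod_cast (norm_pos_iff.mpr (sub_ne_zero.mpr hxy)).ne'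
  have hexp : exp (-(I * κ * ‖x‖)) * exp (I * κ * ‖x - y‖) = exp (I * ↑(κ * (‖x - y‖ - ‖x‖))) := by
    rw [← exp_add]; push_cast; ring_nf
  rw [helmholtzG, ← hexp]
  push_cast
  field_simp

theorem norm_helmholtzG_rescaled_sub_le {κ M : ℝ} {x y : EuclideanSpace ℝ (Fin 3)}
    (hx : x ≠ 0) (hy : ‖y‖ ≤ M) (hxM : 2 * M ≤ ‖x‖) :
    ‖(‖x‖ : ℂ) * exp (-(I * κ * ‖x‖)) * helmholtzG κ x y
        - (4 * Real.pi : ℂ)⁻¹ * exp (-(I * κ * ⟪‖x‖⁻¹ • x, y⟫))‖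
      ≤ (4 * Real.pi)⁻¹ * (2 * M + 2 * |κ| * M ^ 2) / ‖x‖ := by
  have hphase := abs_norm_sub_sub_norm_add_inner_le hx y
  have hdr : |‖x‖ - ‖x - y‖| ≤ M :=
    (abs_norm_sub_norm_le x (x - y)).trans (by rwa [sub_sub_cancel])
  have hM : 0 ≤ M := (norm_nonneg y).trans hy
  have hxy : x ≠ y := by rintro rfl; exact hx (norm_le_zero_iff.mp (by linarith))
  rw [helmholtzG_rescaled_eq κ hxy]
  set r := ‖x‖
  set d := ‖x - y‖
  set s := ⟪‖x‖⁻¹ • x, y⟫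
  have hr : 0 < r := norm_pos_iff.mpr hx
  have hd : r / 2 ≤ d := by linarith [norm_sub_norm_le x y]
  have hd0 : (d : ℂ) ≠ 0 := by exact_mod_cast (by linarith : 0 < d).ne'
  set a := κ * (d - r)
  have hsplit : ((r / d : ℝ) : ℂ) * exp (I * a) - exp (-(I * κ * s))
      = ((r - d) / d : ℝ) * exp (I * a) + (exp (I * a) - exp (I * ↑(-(κ * s)))) := by
    push_cast; field_simp; ring_nf
  have hamp : ‖((r - d) / d : ℝ) * exp (I * a)‖ ≤ 2 * M / r := by
    rw [norm_mul, norm_exp_I_mul_ofReal, mul_one, Complex.norm_real, Real.norm_eq_abs, abs_div,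
      abs_of_pos (by linarith : 0 < d), div_le_div_iff₀ (by linarith) hr]
    nlinarith [mul_le_mul_of_nonneg_right hdr hr.le]
  have hph : ‖exp (I * a) - exp (I * ↑(-(κ * s)))‖ ≤ 2 * |κ| * M ^ 2 / r := by
    refine (norm_exp_I_mul_ofReal_sub_exp_I_mul_ofReal_le _ _).trans ?_
    have hyM : ‖y‖ ^ 2 ≤ M ^ 2 := pow_le_pow_left₀ (norm_nonneg y) hy 2
    calc |a - -(κ * s)| = |κ| * |d - r + s| := by rw [← abs_mul]; simp only [a]; ring_nf
      _ ≤ |κ| * (2 * M ^ 2 / r) := by gcongr; exact hphase.trans (by gcongr)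
      _ = 2 * |κ| * M ^ 2 / r := by ring
  have h4π : ‖(4 * Real.pi : ℂ)‖ = 4 * Real.pi := by
    norm_cast; exact Real.norm_of_nonneg (by positivity)
  rw [← mul_sub, hsplit, norm_mul, norm_inv, h4π, mul_div_assoc, add_div]
  gcongr
  exact (norm_add_le _ _).trans (add_le_add hamp hph)

theorem integrable_helmholtzG_mul {μ : Measure (EuclideanSpace ℝ (Fin 3))}
    {ρ : EuclideanSpace ℝ (Fin 3) → ℂ} (hρ : Integrable ρ μ) (κ : ℝ) {x : EuclideanSpace ℝ (Fin 3)}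
    {r : ℝ} (hr : 0 < r) (hxy : ∀ᵐ y ∂μ, r ≤ ‖x - y‖) :
    Integrable (fun y => helmholtzG κ x y * ρ y) μ := by
  refine hρ.bdd_mul (c := (4 * Real.pi * r)⁻¹) ?_ (hxy.mono fun y hy => ?_)
  · exact (by unfold helmholtzG; fun_prop : Measurable (helmholtzG κ x)).aestronglyMeasurable
  · rw [norm_helmholtzG]; gcongr

theorem integrable_exp_inner_mul {E : Type*} [NormedAddCommGroup E] [InnerProductSpace ℝ E]
    [MeasurableSpace E] [OpensMeasurableSpace E] {μ : Measure E} {ρ : E → ℂ} (hρ : Integrable ρ μ)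
    (κ : ℝ) (v : E) :
    Integrable (fun y => exp (-(I * κ * ⟪v, y⟫)) * ρ y) μ := by
  refine hρ.bdd_mul (c := 1) (by fun_prop) (Eventually.of_forall fun y => ?_)
  rw [show -(I * κ * ⟪v, y⟫) = I * ↑(-(κ * ⟪v, y⟫)) by push_cast; ring, norm_exp_I_mul_ofReal]

theorem norm_mul_integral_sub_mul_integral_le {α 𝕜 : Type*} [MeasurableSpace α] [RCLike 𝕜]
    {μ : Measure α} {f g ρ : α → 𝕜} {a b : 𝕜} {c : ℝ} (hρ : Integrable ρ μ)
    (hf : Integrable (fun y => f y * ρ y) μ) (hg : Integrable (fun y => g y * ρ y) μ)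
    (h : ∀ᵐ y ∂μ, ‖a * f y - b * g y‖ ≤ c) :
    ‖a * ∫ y, f y * ρ y ∂μ - b * ∫ y, g y * ρ y ∂μ‖ ≤ c * ∫ y, ‖ρ y‖ ∂μ := by
  rw [← integral_const_mul, ← integral_const_mul, ← integral_sub (hf.const_mul a) (hg.const_mul b),
    ← integral_const_mul]
  refine norm_integral_le_of_norm_le (hρ.norm.const_mul c) (h.mono fun y hy => ?_)
  rw [← mul_assoc, ← mul_assoc, ← sub_mul, norm_mul]
  gcongr

theorem tendsto_zero_of_norm_le_div_norm {E F : Type*} [SeminormedAddCommGroup E]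
    [SeminormedAddCommGroup F] {f : E → F} {C R : ℝ} (h : ∀ x, R ≤ ‖x‖ → ‖f x‖ ≤ C / ‖x‖) :
    Tendsto f (comap norm atTop) (𝓝 0) := by
  have hnorm : Tendsto (norm : E → ℝ) (comap norm atTop) atTop := tendsto_comap
  refine squeeze_zero_norm' ?_ ((tendsto_const_nhds (x := C)).div_atTop hnorm)
  exact (hnorm.eventually_ge_atTop R).mono h

theorem singleLayerPotential_farFieldPattern_general (κ : ℝ)
    (μ : Measure (EuclideanSpace ℝ (Fin 3)))
    (ρ : EuclideanSpace ℝ (Fin 3) → ℂ) (hρ : Integrable ρ μ)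
    (K : Set (EuclideanSpace ℝ (Fin 3))) (hK : IsCompact K) (hsupp : μ Kᶜ = 0)
    (u uInf : EuclideanSpace ℝ (Fin 3) → ℂ)
    (hu : ∀ x, u x = ∫ y, helmholtzG κ x y * ρ y ∂μ)
    (huInf : ∀ xhat, uInf xhat =
      (4 * (Real.pi : ℂ))⁻¹ * ∫ y, Complex.exp (-(Complex.I * (κ : ℂ) * ((⟪xhat, y⟫ : ℝ) : ℂ))) * ρ y ∂μ) :
    Filter.Tendsto
      (fun x : EuclideanSpace ℝ (Fin 3) =>
        (‖x‖ : ℂ) * Complex.exp (-(Complex.I * (κ : ℂ) * (‖x‖ : ℂ))) * u x - uInf (‖x‖⁻¹ • x))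
      (Filter.comap (fun x : EuclideanSpace ℝ (Fin 3) => ‖x‖) Filter.atTop) (nhds 0) ∧
    ∃ C > (0 : ℝ), ∃ R > (0 : ℝ), ∀ x : EuclideanSpace ℝ (Fin 3), R ≤ ‖x‖ →
      ‖(‖x‖ : ℂ) * Complex.exp (-(Complex.I * (κ : ℂ) * (‖x‖ : ℂ))) * u x - uInf (‖x‖⁻¹ • x)‖
        ≤ C / ‖x‖ := by
  obtain ⟨M, hM, hKM⟩ := hK.isBounded.exists_pos_norm_le
  have hsuppM : ∀ᵐ y ∂μ, ‖y‖ ≤ M := (ae_iff.mpr hsupp).mono hKM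
  set C := (4 * Real.pi)⁻¹ * (2 * M + 2 * |κ| * M ^ 2) * ∫ y, ‖ρ y‖ ∂μ
  have hbound : ∀ x : EuclideanSpace ℝ (Fin 3), 2 * M ≤ ‖x‖ →
      ‖(‖x‖ : ℂ) * exp (-(I * κ * ‖x‖)) * u x - uInf (‖x‖⁻¹ • x)‖ ≤ C / ‖x‖ := by
    intro x hx
    have hx0 : x ≠ 0 := norm_pos_iff.mp (by linarith)
    have hxy : ∀ᵐ y ∂μ, M ≤ ‖x - y‖ := hsuppM.mono fun y hy => by linarith [norm_sub_norm_le x y]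
    rw [hu, huInf]
    exact (norm_mul_integral_sub_mul_integral_le hρ (integrable_helmholtzG_mul hρ κ hM hxy)
      (integrable_exp_inner_mul hρ κ _)
      (hsuppM.mono fun y hy => norm_helmholtzG_rescaled_sub_le hx0 hy hx)).trans_eq
      (div_mul_eq_mul_div _ _ _)
  refine ⟨tendsto_zero_of_norm_le_div_norm hbound, C + 1, by positivity, 2 * M, by positivity,
    fun x hx => (hbound x hx).trans ?_⟩
  gcongr
  linarith

/-- Let `κ > 0` and let a finite complex measure with compact support be given, encoded as a
finite positive measure `μ` with an integrable complex density `ρ`, supported in a compact set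
`K` (`μ(Kᶜ) = 0`).  Define the single layer potential `u(x) = ∫ G(x,y) ρ(y) dμ(y)` and
`u_∞(xhat) = (1/4π) ∫ e^{−iκ⟨xhat,y⟩} ρ(y) dμ(y)`.  Then
`‖x‖ e^{−iκ‖x‖} u(x) − u_∞(x/‖x‖) → 0` as `‖x‖ → ∞`; moreover this difference is `O(1/‖x‖)`,
i.e. `u(x) = (e^{iκ‖x‖}/‖x‖)(u_∞(x/‖x‖) + O(1/‖x‖))`, so `u_∞` is the far-field pattern. -/
theorem singleLayerPotential_farFieldPattern (κ : ℝ) (hκ : 0 < κ)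
    (μ : Measure (EuclideanSpace ℝ (Fin 3))) [IsFiniteMeasure μ]
    (ρ : EuclideanSpace ℝ (Fin 3) → ℂ) (hρ : Integrable ρ μ)
    (K : Set (EuclideanSpace ℝ (Fin 3))) (hK : IsCompact K) (hsupp : μ Kᶜ = 0)
    (u uInf : EuclideanSpace ℝ (Fin 3) → ℂ)
    (hu : ∀ x, u x = ∫ y, helmholtzG κ x y * ρ y ∂μ)
    (huInf : ∀ xhat, uInf xhat =
      (4 * (Real.pi : ℂ))⁻¹ * ∫ y, Complex.exp (-(Complex.I * (κ : ℂ) * ((⟪xhat, y⟫ : ℝ) : ℂ))) * ρ y ∂μ) :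
    Filter.Tendsto
      (fun x : EuclideanSpace ℝ (Fin 3) =>
        (‖x‖ : ℂ) * Complex.exp (-(Complex.I * (κ : ℂ) * (‖x‖ : ℂ))) * u x - uInf (‖x‖⁻¹ • x))
      (Filter.comap (fun x : EuclideanSpace ℝ (Fin 3) => ‖x‖) Filter.atTop) (nhds 0) ∧
    ∃ C > (0 : ℝ), ∃ R > (0 : ℝ), ∀ x : EuclideanSpace ℝ (Fin 3), R ≤ ‖x‖ →
      ‖(‖x‖ : ℂ) * Complex.exp (-(Complex.I * (κ : ℂ) * (‖x‖ : ℂ))) * u x - uInf (‖x‖⁻¹ • x)‖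
        ≤ C / ‖x‖ :=
  singleLayerPotential_farFieldPattern_general κ μ ρ hρ K hK hsupp u uInf hu huInf
end

section
/- Let p ≥ 1 and m ≥ 0, let Ξ_{p,m} be the p-open knot vector with interior knots j/2^m (j = 1,…,2^m−1) each of multiplicity one and boundary knots 0 and 1 of multiplicity p+1, and let Ξ'_{p,m} denote the truncation of Ξ_{p,m}, i.e. the knot vector Ξ_{p,m} without its first and last knot (a (p−1)-open knot vector with the same interior knots). Then the derivatives of the splines of degree p reproduce exactly the spline space of degree p−1 on the truncated knot vector: { f' restricted to (0,1) minus the interior knots : f ∈ S_p(Ξ_{p,m}) } = { g restricted to the same set : g ∈ S_{p−1}(Ξ'_{p,m}) }; in particular ∂ S_p(Ξ_{p,m}) = S_{p−1}(Ξ'_{p,m}). -/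
/-- The B-spline basis functions `b_j^p` associated with a knot sequence `ξ`, defined by the
Cox–de Boor recursion, with the convention that any term with zero denominator is zero:
`b_j^0(x) = 1` if `ξ_j ≤ x < ξ_{j+1}` and `0` otherwise, and
`b_j^{p}(x) = (x−ξ_j)/(ξ_{j+p}−ξ_j)·b_j^{p−1}(x) + (ξ_{j+p+1}−x)/(ξ_{j+p+1}−ξ_{j+1})·b_{j+1}^{p−1}(x)`. -/
noncomputable def bspline (ξ : ℕ → ℝ) : ℕ → ℕ → ℝ → ℝ
  | 0, j, x => if ξ j ≤ x ∧ x < ξ (j + 1) then 1 else 0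
  | p + 1, j, x =>
      (if ξ (j + p + 1) = ξ j then 0
        else (x - ξ j) / (ξ (j + p + 1) - ξ j) * bspline ξ p j x) +
      (if ξ (j + p + 2) = ξ (j + 1) then 0
        else (ξ (j + p + 2) - x) / (ξ (j + p + 2) - ξ (j + 1)) * bspline ξ p (j + 1) x)

/-- `ξ` is a `p`-open knot vector with `k` control points: `0 ≤ p ≤ k`, the entries
`ξ_0, …, ξ_{k+p}` are nondecreasing and lie in `[0,1]`, the first `p+1` knots equal `0`
and the last `p+1` knots equal `1`. -/
def IsOpenKnotVector (ξ : ℕ → ℝ) (p k : ℕ) : Prop :=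
  p ≤ k ∧
  (∀ j ≤ p, ξ j = 0) ∧
  (∀ j, k ≤ j → j ≤ k + p → ξ j = 1) ∧
  (∀ i j, i ≤ j → j ≤ k + p → ξ i ≤ ξ j) ∧
  (∀ j ≤ k + p, ξ j ∈ Set.Icc (0 : ℝ) 1)

/-- The uniform `p`-open knot vector `Ξ_{p,m}` on level `m`: the knot `0` repeated `p+1`
times, the interior knots `1/2^m, …, (2^m−1)/2^m`, and the knot `1` repeated `p+1` times;
as a ℕ-indexed sequence, `ξ_j = clamp_{[0,1]}((j−p)/2^m)`. -/
noncomputable def uniformKnots (p m : ℕ) (j : ℕ) : ℝ :=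
  min 1 (max 0 (((j : ℝ) - (p : ℝ)) / 2 ^ m))

/-!
Away from the knots, the Cox–de Boor recursion and the product rule give, by induction on `p`,
`(b_j^p)' = w_j - w_{j+1}` with `w_j = p / (ξ_{j+p} - ξ_j) · b_j^{p-1}`. On the open knot
vector `Ξ_{p,m}` the boundary terms `w_0` and `w_{2^m+p}` vanish, while for `0 < j < 2^m + p`
the knots `ξ_j < ξ_{j+p}` are distinct, so `w_j` is a nonzero multiple of the truncated basis
function `b'_{j-1} = b_j^{p-1}`. Hence the derivatives of `S_p(Ξ_{p,m})` lie in
`S_{p-1}(Ξ'_{p,m})`, and conversely `b_j^{p-1}` is a multiple of the derivative of the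
telescoping sum `∑_{k ≥ j} b_k^p`.
-/

open Filter Topology

theorem eventually_le_iff_of_ne {a x : ℝ} (h : x ≠ a) : ∀ᶠ y in 𝓝 x, (a ≤ y ↔ a ≤ x) := by
  rcases h.lt_or_gt with h | h
  · filter_upwards [eventually_lt_nhds h] with y hy
    simp only [hy.not_ge, h.not_ge]
  · filter_upwards [eventually_gt_nhds h] with y hy
    simp only [hy.le, h.le]

theorem Submodule.exists_mem_prod_of_mem_span {R M N : Type*} [Semiring R] [AddCommMonoid M]
    [AddCommMonoid N] [Module R M] [Module R N] (P : Submodule R (M × N)) (T : Submodule R N)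
    {s : Set M} (hs : ∀ a ∈ s, ∃ b ∈ T, (a, b) ∈ P) {a : M} (ha : a ∈ span R s) :
    ∃ b ∈ T, (a, b) ∈ P := by
  have hle : span R s ≤ (P ⊓ (⊤ : Submodule R M).prod T).map (LinearMap.fst R M N) := by
    refine span_le.mpr fun a ha => ?_
    obtain ⟨b, hb, hab⟩ := hs a ha
    exact ⟨(a, b), ⟨hab, trivial, hb⟩, rfl⟩
  obtain ⟨⟨a, b⟩, ⟨hab, -, hb⟩, rfl⟩ := hle ha
  exact ⟨b, hb, hab⟩

def derivPairs (U : Set ℝ) : Submodule ℝ ((ℝ → ℝ) × (ℝ → ℝ)) where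
  carrier := {fg | ∀ x ∈ U, HasDerivAt fg.1 (fg.2 x) x}
  add_mem' hf hg x hx := (hf x hx).add (hg x hx)
  zero_mem' x _ := hasDerivAt_const x 0
  smul_mem' c _ hf x hx := (hf x hx).const_smul c

theorem bspline_succ_apply (ξ : ℕ → ℝ) (p j : ℕ) (x : ℝ) :
    bspline ξ (p + 1) j x =
      (x - ξ j) / (ξ (j + p + 1) - ξ j) * bspline ξ p j x +
        (ξ (j + p + 2) - x) / (ξ (j + p + 2) - ξ (j + 1)) * bspline ξ p (j + 1) x := by
  simp only [bspline]
  split_ifs <;> simp_all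

theorem bspline_shift (ξ : ℕ → ℝ) (p j : ℕ) :
    bspline (fun i => ξ (i + 1)) p j = bspline ξ p (j + 1) := by
  induction p generalizing j with
  | zero => rfl
  | succ p ih =>
    funext x
    simp only [bspline_succ_apply, ih]
    ring_nf

/-- The term `w_j` of `(b_j^p)' = w_j - w_{j+1}`; Lean's `a / 0 = 0` implements the convention
`0/0 = 0` here. -/
noncomputable def bsplineDerivTerm (ξ : ℕ → ℝ) (p j : ℕ) (x : ℝ) : ℝ :=
  p / (ξ (j + p) - ξ j) * bspline ξ (p - 1) j x

noncomputable def splineSpace (ξ : ℕ → ℝ) (p n : ℕ) : Submodule ℝ (ℝ → ℝ) :=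
  Submodule.span ℝ (Set.range fun j : Fin n => bspline ξ p j)

section BSpline

variable {ξ : ℕ → ℝ}

theorem bsplineDerivTerm_eq_zero {p j : ℕ} (h : ξ (j + p) = ξ j) : bsplineDerivTerm ξ p j = 0 := by
  funext x
  simp [bsplineDerivTerm, h]

theorem bsplineDerivTerm_succ_sub (hξ : Monotone ξ) (p j : ℕ) (x : ℝ) :
    bsplineDerivTerm ξ (p + 1) j x - bsplineDerivTerm ξ (p + 1) (j + 1) x =
      1 / (ξ (j + p + 1) - ξ j) * bspline ξ p j x +
        (x - ξ j) / (ξ (j + p + 1) - ξ j) *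
          (bsplineDerivTerm ξ p j x - bsplineDerivTerm ξ p (j + 1) x) +
      ((-1) / (ξ (j + p + 2) - ξ (j + 1)) * bspline ξ p (j + 1) x +
        (ξ (j + p + 2) - x) / (ξ (j + p + 2) - ξ (j + 1)) *
          (bsplineDerivTerm ξ p (j + 1) x - bsplineDerivTerm ξ p (j + 2) x)) := by
  cases p with
  | zero =>
    simp only [bsplineDerivTerm]
    ring_nf
  | succ r =>
    have hcancel : ∀ {a b : ℝ}, 0 ≤ a → a ≤ b → a⁻¹ * (b * b⁻¹) = a⁻¹ := by
      intro a b ha hab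
      rcases ha.eq_or_lt with rfl | ha
      · simp
      · rw [mul_inv_cancel₀ (by linarith), mul_one]
    have h1 : ξ (j + 1) ≤ ξ (j + r + 2) := hξ (by omega)
    have h0 := hcancel (sub_nonneg.2 h1) (sub_le_sub_left (hξ (by omega : j ≤ j + 1)) _)
    have h2 := hcancel (sub_nonneg.2 h1) (sub_le_sub_right (hξ (by omega : j + r + 2 ≤ j + r + 3)) _)
    -- Only the `b_{j+1}^r` terms do not cancel formally. They do cancel: if `ξ_{j+1} < ξ_{j+r+2}`
    -- then both outer denominators are nonzero, and otherwise their coefficient is `0⁻¹ = 0`.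
    have key := congrArg (fun t => (r + 1 : ℝ) * bspline ξ r (j + 1) x * t) (h0.trans h2.symm)
    simp only [bsplineDerivTerm, bspline_succ_apply, Nat.add_sub_cancel]
    push_cast
    ring_nf at key ⊢
    linear_combination key

theorem hasDerivAt_bspline_zero {j : ℕ} {x : ℝ} (hj : x ≠ ξ j) (hj' : x ≠ ξ (j + 1)) :
    HasDerivAt (bspline ξ 0 j) 0 x := by
  refine (hasDerivAt_const x (bspline ξ 0 j x)).congr_of_eventuallyEq ?_
  filter_upwards [eventually_le_iff_of_ne hj, eventually_le_iff_of_ne hj'] with y h h'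
  simp only [bspline, ← not_le, h, h']

theorem hasDerivAt_bspline (hξ : Monotone ξ) {x : ℝ} (hx : ∀ i, x ≠ ξ i) (p j : ℕ) :
    HasDerivAt (bspline ξ p j) (bsplineDerivTerm ξ p j x - bsplineDerivTerm ξ p (j + 1) x) x := by
  induction p generalizing j with
  | zero => simpa [bsplineDerivTerm] using hasDerivAt_bspline_zero (hx j) (hx (j + 1))
  | succ p ih =>
    rw [show bspline ξ (p + 1) j = _ from funext (bspline_succ_apply ξ p j)]
    refine HasDerivAt.congr_deriv
      (((((hasDerivAt_id' x).sub_const (ξ j)).div_const _).fun_mul (ih j)).fun_add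
        ((((hasDerivAt_const x _).fun_sub (hasDerivAt_id' x)).div_const _).fun_mul (ih (j + 1)))) ?_
    rw [bsplineDerivTerm_succ_sub hξ]
    ring

theorem hasDerivAt_sum_bspline_Ico (hξ : Monotone ξ) {x : ℝ} (hx : ∀ i, x ≠ ξ i) (p : ℕ)
    {k n : ℕ} (hkn : k ≤ n) :
    HasDerivAt (∑ j ∈ Finset.Ico k n, bspline ξ p j)
      (bsplineDerivTerm ξ p k x - bsplineDerivTerm ξ p n x) x := by
  refine (HasDerivAt.sum fun j _ => hasDerivAt_bspline hξ hx p j).congr_deriv ?_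
  rw [← neg_sub, ← Finset.sum_Ico_sub (fun j => bsplineDerivTerm ξ p j x) hkn,
    ← Finset.sum_neg_distrib]
  simp only [neg_sub]

variable {U : Set ℝ} {p n : ℕ}

theorem bsplineDerivTerm_mem_splineSpace (h0 : ξ p = ξ 0) (hn : ξ (n + p) = ξ n) {j : ℕ}
    (hj : j ≤ n) : bsplineDerivTerm ξ p j ∈ splineSpace (fun i => ξ (i + 1)) (p - 1) (n - 1) := by
  rcases Nat.eq_zero_or_pos j with rfl | hj0
  · rw [bsplineDerivTerm_eq_zero (by rwa [zero_add])]
    exact zero_mem _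
  rcases hj.eq_or_lt with rfl | hjn
  · rw [bsplineDerivTerm_eq_zero hn]
    exact zero_mem _
  have hterm : bsplineDerivTerm ξ p j =
      (p / (ξ (j + p) - ξ j)) • bspline (fun i => ξ (i + 1)) (p - 1) (j - 1) := by
    rw [bspline_shift, Nat.sub_add_cancel hj0]
    rfl
  rw [hterm]
  exact Submodule.smul_mem _ _ (Submodule.subset_span ⟨⟨j - 1, by omega⟩, rfl⟩)

theorem exists_hasDerivAt_mem_splineSpace (hξ : Monotone ξ) (hU : ∀ x ∈ U, ∀ i, x ≠ ξ i)
    (h0 : ξ p = ξ 0) (hn : ξ (n + p) = ξ n) {f : ℝ → ℝ} (hf : f ∈ splineSpace ξ p n) :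
    ∃ g ∈ splineSpace (fun i => ξ (i + 1)) (p - 1) (n - 1), ∀ x ∈ U, HasDerivAt f (g x) x := by
  refine Submodule.exists_mem_prod_of_mem_span (derivPairs U) _ ?_ hf
  rintro _ ⟨j, rfl⟩
  exact ⟨_, sub_mem (bsplineDerivTerm_mem_splineSpace h0 hn j.is_lt.le)
    (bsplineDerivTerm_mem_splineSpace h0 hn j.is_lt),
    fun x hx => hasDerivAt_bspline hξ (hU x hx) p j⟩

theorem exists_hasDerivAt_eq_of_mem_splineSpace (hξ : Monotone ξ) (hU : ∀ x ∈ U, ∀ i, x ≠ ξ i)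
    (hp : 0 < p) (hne : ∀ i, 0 < i → i < n → ξ i ≠ ξ (i + p)) (hn : ξ (n + p) = ξ n)
    {g : ℝ → ℝ} (hg : g ∈ splineSpace (fun i => ξ (i + 1)) (p - 1) (n - 1)) :
    ∃ f ∈ splineSpace ξ p n, ∀ x ∈ U, HasDerivAt f (g x) x := by
  refine Submodule.exists_mem_prod_of_mem_span ((derivPairs U).comap
    (LinearEquiv.prodComm ℝ _ _).toLinearMap) _ ?_ hg
  rintro _ ⟨i, rfl⟩
  -- `b_{i+1}^{p-1}` is a multiple of the derivative of the telescoping sum `∑_{i < j < n} b_j^p`.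
  have hi : (i : ℕ) + 1 < n := by omega
  have hΔ : ξ ((i : ℕ) + 1 + p) - ξ (i + 1) ≠ 0 := sub_ne_zero.mpr (hne _ (Nat.succ_pos _) hi).symm
  refine ⟨((ξ ((i : ℕ) + 1 + p) - ξ (i + 1)) / p) • ∑ j ∈ Finset.Ico ((i : ℕ) + 1) n, bspline ξ p j,
    Submodule.smul_mem _ _ (Submodule.sum_mem _ fun j hj =>
      Submodule.subset_span ⟨⟨j, (Finset.mem_Ico.mp hj).2⟩, rfl⟩), fun x hx => ?_⟩
  change HasDerivAt _ (bspline (fun i => ξ (i + 1)) (p - 1) i x) x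
  refine ((hasDerivAt_sum_bspline_Ico hξ (hU x hx) p hi.le).const_smul _).congr_deriv ?_
  rw [bsplineDerivTerm_eq_zero hn, bspline_shift]
  simp only [bsplineDerivTerm, Pi.zero_apply, sub_zero, smul_eq_mul]
  field_simp [hp.ne']

end BSpline

theorem uniformKnots_mono (p m : ℕ) : Monotone (uniformKnots p m) := by
  intro a b hab
  unfold uniformKnots
  gcongr

section UniformKnots

variable {p m : ℕ}

theorem uniformKnots_of_le {j : ℕ} (h : j ≤ p) : uniformKnots p m j = 0 := by
  have hj : ((j : ℝ) - p) / 2 ^ m ≤ 0 :=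
    div_nonpos_of_nonpos_of_nonneg (by simpa using h) (by positivity)
  simp [uniformKnots, hj]

theorem uniformKnots_of_ge {j : ℕ} (h : p + 2 ^ m ≤ j) : uniformKnots p m j = 1 := by
  have hj : (1 : ℝ) ≤ ((j : ℝ) - p) / 2 ^ m := by
    rw [le_div_iff₀ (by positivity)]
    have : (p : ℝ) + 2 ^ m ≤ j := by exact_mod_cast h
    linarith
  exact min_eq_left (le_max_of_le_right hj)

theorem uniformKnots_lt_add (hp : 0 < p) {i : ℕ} (hi : 0 < i) (hin : i < 2 ^ m + p) :
    uniformKnots p m i < uniformKnots p m (i + p) := by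
  have hi' : (0 : ℝ) < i := by exact_mod_cast hi
  have hin' : (i : ℝ) < 2 ^ m + p := by exact_mod_cast hin
  have hp' : (0 : ℝ) < p := by exact_mod_cast hp
  have h1 : ((i : ℝ) - p) / 2 ^ m < 1 := by rw [div_lt_one (by positivity)]; linarith
  have h2 : 0 < ((↑(i + p) : ℝ) - p) / 2 ^ m := by
    rw [Nat.cast_add, add_sub_cancel_right]
    positivity
  have h3 : ((i : ℝ) - p) / 2 ^ m < ((↑(i + p) : ℝ) - p) / 2 ^ m := by
    gcongr
    linarith
  unfold uniformKnots
  calc min 1 (max 0 (((i : ℝ) - p) / 2 ^ m)) ≤ max 0 (((i : ℝ) - p) / 2 ^ m) := min_le_right _ _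
    _ < _ := lt_min (max_lt one_pos h1) (max_lt (lt_max_of_lt_right h2) (lt_max_of_lt_right h3))

theorem ne_uniformKnots {x : ℝ}
    (hx : x ∈ Set.Ioo (0 : ℝ) 1 \ {x : ℝ | ∃ j : ℕ, 0 < j ∧ j < 2 ^ m ∧ x = (j : ℝ) / 2 ^ m})
    (i : ℕ) : x ≠ uniformKnots p m i := by
  rintro rfl
  obtain ⟨⟨h0, h1⟩, hknot⟩ := hx
  set a := ((i : ℝ) - p) / 2 ^ m with ha
  have ha0 : 0 < a := by
    by_contra! h
    simp [uniformKnots, ← ha, h] at h0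
  have ha1 : a < 1 := by
    by_contra! h
    simp [uniformKnots, ← ha, le_max_of_le_right h] at h1
  have hpi : p < i := by
    have : (p : ℝ) < i := by linarith [(div_pos_iff_of_pos_right (by positivity)).mp ha0]
    exact_mod_cast this
  refine hknot ⟨i - p, by omega, ?_, ?_⟩
  · have : ((i - p : ℕ) : ℝ) < 2 ^ m := by
      push_cast [hpi.le]
      linarith [(div_lt_one (by positivity)).mp ha1]
    exact_mod_cast this
  · simp [uniformKnots, ← ha, ha0.le, ha1.le, Nat.cast_sub hpi.le]

end UniformKnots

/-- Derivatives of splines of degree `p ≥ 1` on `Ξ_{p,m}` reproduce exactly the splines of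
degree `p−1` on the truncated knot vector `Ξ'_{p,m}` (the knot vector without its first and
last knot, i.e. the index-shifted sequence `j ↦ ξ_{j+1}`, a `(p−1)`-open knot vector with
`2^m + p − 1` control points).  Both spaces are compared as functions on
`D = (0,1) \ {interior knots}`, where every spline is differentiable:
`{f'|_D : f ∈ S_p(Ξ_{p,m})} = {g|_D : g ∈ S_{p−1}(Ξ'_{p,m})}`. -/
theorem deriv_spline_space_eq (p m : ℕ) (hp : 1 ≤ p) :
    {h : ((Set.Ioo (0 : ℝ) 1) \
            {x : ℝ | ∃ j : ℕ, 0 < j ∧ j < 2 ^ m ∧ x = (j : ℝ) / 2 ^ m} : Set ℝ) → ℝ |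
        ∃ f ∈ Submodule.span ℝ
            (Set.range fun j : Fin (2 ^ m + p) => bspline (uniformKnots p m) p j),
          h = Set.restrict _ (deriv f)} =
    {h : ((Set.Ioo (0 : ℝ) 1) \
            {x : ℝ | ∃ j : ℕ, 0 < j ∧ j < 2 ^ m ∧ x = (j : ℝ) / 2 ^ m} : Set ℝ) → ℝ |
        ∃ g ∈ Submodule.span ℝ
            (Set.range fun j : Fin (2 ^ m + p - 1) =>
              bspline (fun i => uniformKnots p m (i + 1)) (p - 1) j),
          h = Set.restrict _ g} := by
  have h0 : uniformKnots p m p = uniformKnots p m 0 := by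
    rw [uniformKnots_of_le le_rfl, uniformKnots_of_le (Nat.zero_le p)]
  have hn : uniformKnots p m (2 ^ m + p + p) = uniformKnots p m (2 ^ m + p) := by
    rw [uniformKnots_of_ge (by omega), uniformKnots_of_ge (by omega)]
  have hne : ∀ i, 0 < i → i < 2 ^ m + p → uniformKnots p m i ≠ uniformKnots p m (i + p) :=
    fun i hi hin => (uniformKnots_lt_add hp hi hin).ne
  ext h
  constructor
  · rintro ⟨f, hf, rfl⟩
    obtain ⟨g, hg, hfg⟩ := exists_hasDerivAt_mem_splineSpace (uniformKnots_mono p m)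
      (fun _ hx => ne_uniformKnots hx) h0 hn hf
    exact ⟨g, hg, funext fun x => (hfg x x.2).deriv⟩
  · rintro ⟨g, hg, rfl⟩
    obtain ⟨f, hf, hfg⟩ := exists_hasDerivAt_eq_of_mem_splineSpace (uniformKnots_mono p m)
      (fun _ hx => ne_uniformKnots hx) hp hne hn hg
    exact ⟨f, hf, funext fun x => (hfg x x.2).deriv.symm⟩
end
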